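/- If Q is a subdivision of a partition P of [n+1] and y ∈ ν_P, then |e_{P,Q}(π_P(y)) − π_Q(y)| ≤ 2ε_P, where the norm is the Euclidean norm on (ℝ^d)^q. -/

import Mathlib

open scoped BigOperators
open Finset

noncomputable section

namespace SinhaKnots

attribute [local instance] Classical.propDecidable

/-- `ℝ^d` with the Euclidean norm. -/
abbrev Rd (d : ℕ) := EuclideanSpace ℝ (Fin d)

/-- `(ℝ^d)^m` with the Euclidean norm. -/
abbrev Vec (m d : ℕ) := PiLp 2 (fun _ : Fin m => Rd d)

/-- The first standard basis vector `u = (1,0,…,0)` of `ℝ^d`. -/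
def uVec (d : ℕ) : Rd d := if h : 0 < d then EuclideanSpace.single ⟨0, h⟩ 1 else 0

/-- The second standard basis vector `v = (0,1,0,…,0)` of `ℝ^d`. -/
def vVec (d : ℕ) : Rd d := if h : 1 < d then EuclideanSpace.single ⟨1, h⟩ 1 else 0

/-- The first coordinate of a vector of `ℝ^d`. -/
def fst {d : ℕ} (x : Rd d) : ℝ := if h : 0 < d then x ⟨0, h⟩ else 0

/-- A partition of `[n+1] = {0,1,…,n+1}` into (at least two) nonempty consecutive intervals,
encoded as a monotone surjection onto `Fin (p+2)`; the pieces are the fibers, totally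
ordered via the index, and `p` is the number of non-extremal pieces. -/
structure IntervalPartition (n : ℕ) where
  p : ℕ
  toFun : Fin (n + 2) → Fin (p + 2)
  mono : Monotone toFun
  surj : Function.Surjective toFun

/-- `Q` is a subdivision of `P`: every piece of `Q` is contained in a piece of `P`,
and `Q ≠ P` (equivalently, `Q` has strictly more pieces). -/
def Subdivides {n : ℕ} (Q P : IntervalPartition n) : Prop :=
  (∀ i j, Q.toFun i = Q.toFun j → P.toFun i = P.toFun j) ∧ P.p < Q.p

/-- The element `i+1` of `[n+1]`, corresponding to the `i`-th component of `(ℝ^d)^n`. -/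
def elt (n : ℕ) (i : Fin n) : Fin (n + 2) := ⟨(i : ℕ) + 1, by omega⟩

/-- The finest partition of `[n+1]`, into singletons. -/
def finest (n : ℕ) : IntervalPartition n :=
  ⟨n, id, monotone_id, Function.surjective_id⟩

variable {n : ℕ}

/-- The piece of `P` with index `a`, as a finite set of elements of `[n+1]`. -/
def fiber (P : IntervalPartition n) (a : Fin (P.p + 2)) : Finset (Fin (n + 2)) :=
  Finset.univ.filter fun i => P.toFun i = a

lemma fiber_nonempty (P : IntervalPartition n) (a : Fin (P.p + 2)) : (fiber P a).Nonempty := by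
  obtain ⟨i, hi⟩ := P.surj a
  exact ⟨i, by simp [fiber, hi]⟩

/-- The minimal element of a piece. -/
def minElt (P : IntervalPartition n) (a : Fin (P.p + 2)) : Fin (n + 2) :=
  (fiber P a).min' (fiber_nonempty P a)

/-- The maximal element of a piece. -/
def maxElt (P : IntervalPartition n) (a : Fin (P.p + 2)) : Fin (n + 2) :=
  (fiber P a).max' (fiber_nonempty P a)

/-- `c_α = ∑_{i ∈ α} c_i`. -/
def cPiece (c : Fin (n + 2) → ℝ) (P : IntervalPartition n) (a : Fin (P.p + 2)) : ℝ :=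
  ∑ i ∈ fiber P a, c i

/-- `c_{≤α} = ∑_{γ < α} c_γ + c_α/2`. -/
def cLE (c : Fin (n + 2) → ℝ) (P : IntervalPartition n) (a : Fin (P.p + 2)) : ℝ :=
  (∑ i ∈ Finset.univ.filter fun i => P.toFun i < a, c i) + cPiece c P a / 2

/-- `c_{≥α} = ∑_{γ > α} c_γ + c_α/2`. -/
def cGE (c : Fin (n + 2) → ℝ) (P : IntervalPartition n) (a : Fin (P.p + 2)) : ℝ :=
  (∑ i ∈ Finset.univ.filter fun i => a < P.toFun i, c i) + cPiece c P a / 2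

/-- `c_{αβ} = ∑_{α < γ < β} c_γ + (c_α + c_β)/2`. -/
def cBetween (c : Fin (n + 2) → ℝ) (P : IntervalPartition n) (a b : Fin (P.p + 2)) : ℝ :=
  (∑ i ∈ Finset.univ.filter fun i => a < P.toFun i ∧ P.toFun i < b, c i)
    + (cPiece c P a + cPiece c P b) / 2

/-- The tuple `x` indexed by the non-extremal pieces, extended to all pieces by the fixed
values `x₀ = (-1+ρc_{α₀}/2)u` and `x_{p+1} = (1-ρc_{α_{p+1}}/2)u` on the extremal pieces. -/
def extTuple (ρ : ℝ) (c : Fin (n + 2) → ℝ) (P : IntervalPartition n) {d : ℕ}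
    (x : Vec P.p d) : Fin (P.p + 2) → Rd d := fun a =>
  if _h0 : (a : ℕ) = 0 then (-1 + ρ * cPiece c P 0 / 2) • uVec d
  else if _h1 : (a : ℕ) = P.p + 1 then
    (1 - ρ * cPiece c P (Fin.last (P.p + 1)) / 2) • uVec d
  else x ⟨(a : ℕ) - 1, by have := a.isLt; omega⟩

/-- The displacement (along `u`) of the center of the subsegment corresponding to the
`Q`-piece of `i` inside the segment of the `P`-piece of `i`, for a refinement `Q` of `P`. -/
def offsetQ (ρ : ℝ) (c : Fin (n + 2) → ℝ) (P Q : IntervalPartition n) (i : Fin (n + 2)) : ℝ :=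
  ρ * (- cPiece c P (P.toFun i) / 2
    + (∑ j ∈ Finset.univ.filter fun j => P.toFun j = P.toFun i ∧ Q.toFun j < Q.toFun i, c j)
    + cPiece c Q (Q.toFun i) / 2)

/-- The affine injection `e_{P,Q} : (ℝ^d)^p → (ℝ^d)^q` for a refinement `Q` of `P`. -/
def eMap (ρ : ℝ) (c : Fin (n + 2) → ℝ) (P Q : IntervalPartition n) {d : ℕ}
    (x : Vec P.p d) : Vec Q.p d := WithLp.toLp 2 fun b =>
  extTuple ρ c P x (P.toFun (minElt Q (elt Q.p b)))
    + offsetQ ρ c P Q (minElt Q (elt Q.p b)) • uVec d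

/-- The affine injection `e_P : (ℝ^d)^p → (ℝ^d)^n`. -/
def ePt (ρ : ℝ) (c : Fin (n + 2) → ℝ) (P : IntervalPartition n) {d : ℕ}
    (x : Vec P.p d) : Vec n d :=
  eMap ρ c P (finest n) x

/-- `ε_P = ε/8^{n-p}`. -/
def epsP (ε : ℝ) (P : IntervalPartition n) : ℝ := ε / 8 ^ (n - P.p)

/-- The open `ε_P`-neighborhood `ν_P` of `e_P((ℝ^d)^p)` in `(ℝ^d)^n`. -/
def nuP (ρ ε : ℝ) (c : Fin (n + 2) → ℝ) (P : IntervalPartition n) (d : ℕ) : Set (Vec n d) :=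
  {y | ∃ x : Vec P.p d, ‖y - ePt ρ c P x‖ < epsP ε P}

/-- The orthogonal projection `π_P : (ℝ^d)^n → (ℝ^d)^p`, i.e. the unique minimizer of
`x ↦ |y - e_P(x)|`; explicitly, its `α`-component is the average of `y_i - o_i u` over the
elements `i` of the piece `α`, where `o_i` is the offset of `i` in `e_P`. -/
def projP (ρ : ℝ) (c : Fin (n + 2) → ℝ) (P : IntervalPartition n) {d : ℕ}
    (y : Vec n d) : Vec P.p d := WithLp.toLp 2 fun a =>
  ((Finset.univ.filter fun i : Fin n => P.toFun (elt n i) = elt P.p a).card : ℝ)⁻¹ •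
    ∑ i ∈ Finset.univ.filter fun i : Fin n => P.toFun (elt n i) = elt P.p a,
      (y i - offsetQ ρ c P (finest n) (elt n i) • uVec d)

/-- The component of a tuple `x ∈ (ℝ^d)^m` at a non-extremal vertex index `w` (and `0` at
the extremal indices, where there is no component). -/
def comp {m d : ℕ} (x : Vec m d) (w : Fin (m + 2)) : Rd d :=
  if h : 0 < (w : ℕ) ∧ (w : ℕ) < m + 1 then x ⟨(w : ℕ) - 1, by omega⟩ else 0

/-- `d_{αβ}(P) = ρ c_{αβ} - ε_P`. -/
def dBound (ρ ε : ℝ) (c : Fin (n + 2) → ℝ) (P : IntervalPartition n)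
    (a b : Fin (P.p + 2)) : ℝ :=
  ρ * cBetween c P a b - epsP ε P

/-- `D_{αβ} = {x : |x_α - x_β| ≤ d_{αβ}(P)}`. -/
def Dset (ρ ε : ℝ) (c : Fin (n + 2) → ℝ) (P : IntervalPartition n) (d : ℕ)
    (a b : Fin (P.p + 2)) : Set (Vec P.p d) :=
  {x | ‖comp x a - comp x b‖ ≤ dBound ρ ε c P a b}

/-- `E_α`. -/
def Eset (ρ ε : ℝ) (c : Fin (n + 2) → ℝ) (P : IntervalPartition n) (d : ℕ)
    (a : Fin (P.p + 2)) : Set (Vec P.p d) :=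
  {x | 1 - ρ * cPiece c P a / 2 + epsP ε P ≤ ‖comp x a‖
    ∨ fst (comp x a) ≤ -1 + ρ * cLE c P a - epsP ε P
    ∨ 1 - ρ * cGE c P a + epsP ε P ≤ fst (comp x a)}

/-- `E_P = ⋃_α E_α` over the non-extremal pieces `α`. -/
def EsetP (ρ ε : ℝ) (c : Fin (n + 2) → ℝ) (P : IntervalPartition n) (d : ℕ) :
    Set (Vec P.p d) :=
  ⋃ a ∈ {a : Fin (P.p + 2) | 0 < (a : ℕ) ∧ (a : ℕ) < P.p + 1}, Eset ρ ε c P d a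

/-- The configuration space `E(P) ⊂ (ℝ^d)^p`. -/
def Econf (ρ : ℝ) (c : Fin (n + 2) → ℝ) (P : IntervalPartition n) (d : ℕ) :
    Set (Vec P.p d) :=
  {x | (∀ w : Fin (P.p + 2), 0 < (w : ℕ) → (w : ℕ) < P.p + 1 →
          ‖comp x w‖ ≤ 1 - ρ * cPiece c P w / 2 ∧
          -1 + ρ * cLE c P w ≤ fst (comp x w) ∧
          fst (comp x w) ≤ 1 - ρ * cGE c P w) ∧
       ∀ w w' : Fin (P.p + 2), 0 < (w : ℕ) → (w' : ℕ) < P.p + 1 → w < w' →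
          ρ * cBetween c P w w' ≤ ‖comp x w - comp x w'‖}

/-! ### Graphs -/

/-- A graph on a partition with `m` non-extremal pieces: a finite set of edges, each being a
pair of vertices (vertices are the pieces, i.e. elements of `Fin (m+2)`). -/
abbrev GraphOn (m : ℕ) := Finset (Fin (m + 2) × Fin (m + 2))

/-- The edges go between non-extremal vertices and are increasing pairs. -/
def IsGraphOn {m : ℕ} (G : GraphOn m) : Prop :=
  ∀ e ∈ G, 0 < (e.1 : ℕ) ∧ e.1 < e.2 ∧ (e.2 : ℕ) < m + 1

/-- Adjacency relation of a graph. -/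
def adj {m : ℕ} (G : GraphOn m) (a b : Fin (m + 2)) : Prop :=
  ∃ e ∈ G, (e.1 = a ∧ e.2 = b) ∨ (e.1 = b ∧ e.2 = a)

/-- `conn G a b` : `a` and `b` lie in the same connected component of `G`. -/
def conn {m : ℕ} (G : GraphOn m) : Fin (m + 2) → Fin (m + 2) → Prop :=
  Relation.ReflTransGen (adj G)

/-- A vertex is discrete if no edge is incident with it. -/
def IsDiscrete {m : ℕ} (G : GraphOn m) (a : Fin (m + 2)) : Prop :=
  ∀ e ∈ G, e.1 ≠ a ∧ e.2 ≠ a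

lemma adj_symm {m : ℕ} (G : GraphOn m) : Symmetric (adj G) := by
  rintro a b ⟨e, he, h⟩
  exact ⟨e, he, h.symm⟩

/-- Being in the same connected component is an equivalence relation. -/
def connSetoid {m : ℕ} (G : GraphOn m) : Setoid (Fin (m + 2)) where
  r := conn G
  iseqv := by
    refine ⟨fun _ => Relation.ReflTransGen.refl, ?_, fun h h' => h.trans h'⟩
    intro x y h
    induction h with
    | refl => exact Relation.ReflTransGen.refl
    | tail _ hab ih => exact Relation.ReflTransGen.head (adj_symm G hab) ih

/-- The number of connected components of a graph (all `m+2` vertices included). -/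
def ncomp {m : ℕ} (G : GraphOn m) : ℕ := Fintype.card (Quotient (connSetoid G))

/-- `e` is a bridge of `G` if removing it increases the number of connected components. -/
def IsBridge {m : ℕ} (G : GraphOn m) (e : Fin (m + 2) × Fin (m + 2)) : Prop :=
  e ∈ G ∧ ncomp G < ncomp (G.erase e)

/-! ### Condensed maps -/

/-- The convex hull of `{f_j(x) : j ∈ α}`. -/
def hullPoints {d : ℕ} (P : IntervalPartition n) {X : Type*} (f : X → Vec n d) (x : X)
    (a : Fin (P.p + 2)) : Set (Rd d) :=
  convexHull ℝ {q | ∃ j : Fin n, P.toFun (elt n j) = a ∧ q = f x j}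

/-- `a` is a base (of its connected component of `G`) for the map `f`. -/
def IsBase {d : ℕ} (P : IntervalPartition n) (G : GraphOn P.p) {X : Type*}
    (f : X → Vec n d) (a : Fin (P.p + 2)) : Prop :=
  (∀ x : X, ∀ b, conn G a b → ∀ i : Fin n, P.toFun (elt n i) = b →
      f x i ∈ hullPoints P f x a)
  ∧ ∀ e ∈ G, conn G a e.1 → ¬(e.1 < a ∧ e.2 < a)

/-- A map `f : X → (ℝ^d)^n` is `G`-condensed: it is proper and each connected component
of `G` has a base. -/
def IsCondensed {d : ℕ} (P : IntervalPartition n) (G : GraphOn P.p) {X : Type*}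
    [TopologicalSpace X] (f : X → Vec n d) : Prop :=
  IsProperMap f ∧ ∀ a : Fin (P.p + 2), ∃ b, conn G a b ∧ IsBase P G f b

/-- `⋂_{(α,β) ∈ E(G)} D_{αβ}`. -/
def interD (ρ ε : ℝ) (c : Fin (n + 2) → ℝ) (P : IntervalPartition n) (d : ℕ)
    (G : GraphOn P.p) : Set (Vec P.p d) :=
  ⋂ e ∈ G, Dset ρ ε c P d e.1 e.2

/-- `U_G`. -/
def Uset (ρ ε : ℝ) (c : Fin (n + 2) → ℝ) (P : IntervalPartition n) (d : ℕ)
    (G : GraphOn P.p) : Set (Vec n d) :=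
  (nuP ρ ε c P d)ᶜ ∪ (projP ρ c P) ⁻¹' (interD ρ ε c P d G)

/-- Product of the projections to the first coordinate. -/
def p1 {m d : ℕ} (y : Vec m d) : Fin m → ℝ := fun i => fst (y i)

/-- `U_G^1`. -/
def Uset1 (ρ ε : ℝ) (c : Fin (n + 2) → ℝ) (P : IntervalPartition n) (d : ℕ)
    (G : GraphOn P.p) : Set (Vec n d) :=
  (p1 ⁻¹' (p1 '' nuP ρ ε c P d))ᶜ
    ∪ p1 ⁻¹' (p1 '' ((projP ρ c P) ⁻¹' (interD ρ ε c P d G)))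

/-! ### Contractions and homotopies -/

/-- The translation vector `A_e(s)` of the `e`-contraction. -/
def Acontr {d : ℕ} (P : IntervalPartition n) (G : GraphOn P.p)
    (e : Fin (P.p + 2) × Fin (P.p + 2)) (s : ℝ) : Vec n d := WithLp.toLp 2 fun i =>
  if conn (G.erase e) (P.toFun (elt n i)) e.1 then s • vVec d
  else if conn (G.erase e) (P.toFun (elt n i)) e.2 then -(s • vVec d) else 0

/-- The `e`-contraction `F(x,s) = f(x) + A_e(s)` of `f` for `G`. -/
def econtr {d : ℕ} (P : IntervalPartition n) (G : GraphOn P.p)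
    (e : Fin (P.p + 2) × Fin (P.p + 2)) {X : Type*} (f : X → Vec n d) :
    X × ↥(Set.Ici (0 : ℝ)) → Vec n d :=
  fun q => f q.1 + Acontr P G e (q.2 : ℝ)

/-- The `(e,e')`-contraction `F(x,s₁,s₂) = f(x) + A_e(s₁) + A_{e'}(s₂)` of `f` for `G`. -/
def eecontr {d : ℕ} (P : IntervalPartition n) (G : GraphOn P.p)
    (e e' : Fin (P.p + 2) × Fin (P.p + 2)) {X : Type*} (f : X → Vec n d) :
    X × ↥(Set.Ici (0 : ℝ)) × ↥(Set.Ici (0 : ℝ)) → Vec n d :=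
  fun q => f q.1 + Acontr P G e (q.2.1 : ℝ) + Acontr P G e' (q.2.2 : ℝ)

/-- The `(i,σ)`-contraction of a map `F` (σ = ±1): add `σsu` to the `i`-th component and
`-σsu` to the `(i+1)`-th component. Components are numbered `1,…,m` (the `k`-th coordinate
of `Vec m d` is component number `k+1`). -/
def icontr {m d : ℕ} {Y : Type*} (F : Y → Vec m d) (i : ℕ) (σ : ℝ) :
    Y × ↥(Set.Ici (0 : ℝ)) → Vec m d :=
  fun q => WithLp.toLp 2 fun k => F q.1 k +
    (if (k : ℕ) + 1 = i then σ * (q.2 : ℝ)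
     else if (k : ℕ) + 1 = i + 1 then -(σ * (q.2 : ℝ)) else 0) • uVec d

/-- The straight homotopy from `f` to `g`. -/
def straightH {V : Type*} [AddCommGroup V] [Module ℝ V] {Y : Type*} (f g : Y → V) :
    Y × ↥(Set.Icc (0 : ℝ) 1) → V :=
  fun q => (1 - (q.2 : ℝ)) • f q.1 + (q.2 : ℝ) • g q.1

/-! ### Merging pieces (the face operations δ) -/

/-- Value of the vertex map merging the pieces (0-based) `k` and `k+1`. -/
def vmapVal (m k : ℕ) (a : ℕ) : ℕ :=
  if m = 0 then a else min (if a ≤ k then a else a - 1) m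

/-- The vertex map of the merge, `Fin (m+2) → Fin (m-1+2)`. -/
def vmapFin (m k : ℕ) (a : Fin (m + 2)) : Fin (m - 1 + 2) :=
  ⟨vmapVal m k (a : ℕ), by have := a.isLt; unfold vmapVal; split <;> omega⟩

/-- The partition `δ_kP` obtained from `P` by uniting its `(k+1)`-th and `(k+2)`-th pieces
(i.e. the pieces of 0-based indices `k` and `k+1`). -/
def deltaPart (P : IntervalPartition n) (k : ℕ) : IntervalPartition n where
  p := P.p - 1
  toFun := fun i => vmapFin P.p k (P.toFun i)
  mono := by
    intro a b hab
    have h2 : (P.toFun a : ℕ) ≤ (P.toFun b : ℕ) := P.mono hab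
    simp only [vmapFin, Fin.mk_le_mk, vmapVal]
    split_ifs <;> omega
  surj := by
    intro b
    have hb := b.isLt
    by_cases h0 : P.p = 0
    · obtain ⟨i, hi⟩ := P.surj ⟨(b : ℕ), by omega⟩
      refine ⟨i, Fin.ext ?_⟩
      simp only [vmapFin, vmapVal, hi, h0, if_true]
    · rcases le_or_gt (b : ℕ) k with hbk | hbk
      · obtain ⟨i, hi⟩ := P.surj ⟨(b : ℕ), by omega⟩
        refine ⟨i, Fin.ext ?_⟩
        simp only [vmapFin, vmapVal, hi, h0, if_false]
        split_ifs <;> omega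
      · obtain ⟨i, hi⟩ := P.surj ⟨(b : ℕ) + 1, by omega⟩
        refine ⟨i, Fin.ext ?_⟩
        simp only [vmapFin, vmapVal, hi, h0, if_false]
        split_ifs <;> omega

/-- For a refinement pair (`Q` refines `P`): the piece of `P` containing a given piece of
`Q`. -/
def pieceMap (Q P : IntervalPartition n) : Fin (Q.p + 2) → Fin (P.p + 2) :=
  fun b => P.toFun (minElt Q b)

/-- The image graph on a coarser partition (e.g. `δ_iG` on `δ_iQ`). -/
def pushGraph (Q P : IntervalPartition n) (G : GraphOn Q.p) : GraphOn P.p :=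
  G.image fun e => (pieceMap Q P e.1, pieceMap Q P e.2)

/-- The image graph is an honest graph: no loops nor double edges are created
(injectivity of the edge map) and no edge is incident with an extremal piece. -/
def GoodPush (Q P : IntervalPartition n) (G : GraphOn Q.p) : Prop :=
  Set.InjOn (fun e : Fin (Q.p + 2) × Fin (Q.p + 2) => (pieceMap Q P e.1, pieceMap Q P e.2)) ↑G
  ∧ IsGraphOn (pushGraph Q P G)

/-! ### Auxiliary lemmas for statement 2 -/

lemma toFun_zero (P : IntervalPartition n) : P.toFun 0 = 0 := by
  obtain ⟨i, hi⟩ := P.surj 0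
  exact le_antisymm (hi ▸ P.mono (Fin.zero_le i)) (Fin.zero_le _)

lemma toFun_last (P : IntervalPartition n) :
    P.toFun (Fin.last (n + 1)) = Fin.last (P.p + 1) := by
  obtain ⟨i, hi⟩ := P.surj (Fin.last _)
  exact le_antisymm (Fin.le_last _) (hi ▸ P.mono (Fin.le_last i))

lemma toFun_minElt (P : IntervalPartition n) (a : Fin (P.p + 2)) :
    P.toFun (minElt P a) = a := by
  have := Finset.min'_mem (fiber P a) (fiber_nonempty P a)
  exact (Finset.mem_filter.1 this).2

lemma minElt_finest (a : Fin (n + 2)) : minElt (finest n) a = a := by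
  have h : fiber (finest n) a = {a} := by
    ext i; simp only [fiber, Finset.mem_filter, Finset.mem_univ, true_and, Finset.mem_singleton]; exact Iff.rfl
  simp [minElt, h]

lemma cPiece_finest (c : Fin (n + 2) → ℝ) (a : Fin (n + 2)) :
    cPiece c (finest n) a = c a := by
  have h : fiber (finest n) a = {a} := by
    ext i; simp only [fiber, Finset.mem_filter, Finset.mem_univ, true_and, Finset.mem_singleton]; exact Iff.rfl
  simp [cPiece, h]

lemma offsetQ_congr (ρ : ℝ) (c : Fin (n + 2) → ℝ) (P Q : IntervalPartition n)
    (h1 : ∀ i j, Q.toFun i = Q.toFun j → P.toFun i = P.toFun j)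
    {i i' : Fin (n + 2)} (h : Q.toFun i = Q.toFun i') :
    offsetQ ρ c P Q i = offsetQ ρ c P Q i' := by
  have hP : P.toFun i = P.toFun i' := h1 i i' h
  unfold offsetQ
  rw [hP, h]

lemma offsetQ_add (ρ : ℝ) (c : Fin (n + 2) → ℝ) (P Q : IntervalPartition n)
    (h1 : ∀ i j, Q.toFun i = Q.toFun j → P.toFun i = P.toFun j)
    (i : Fin (n + 2)) :
    offsetQ ρ c P (finest n) i = offsetQ ρ c P Q i + offsetQ ρ c Q (finest n) i := by
  have hsplit : (Finset.univ.filter fun j => P.toFun j = P.toFun i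
        ∧ (finest n).toFun j < (finest n).toFun i)
      = (Finset.univ.filter fun j => P.toFun j = P.toFun i ∧ Q.toFun j < Q.toFun i)
        ∪ (Finset.univ.filter fun j => Q.toFun j = Q.toFun i
            ∧ (finest n).toFun j < (finest n).toFun i) := by
    rw [← Finset.filter_or]
    apply Finset.filter_congr
    intro j _
    simp only [finest, id_eq]
    constructor
    · rintro ⟨hPj, hj⟩
      rcases lt_or_eq_of_le (Q.mono hj.le) with h | h
      · exact Or.inl ⟨hPj, h⟩
      · exact Or.inr ⟨h, hj⟩
    · rintro (⟨hPj, hj⟩ | ⟨hQj, hj⟩)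
      · refine ⟨hPj, ?_⟩
        by_contra hc
        exact absurd (Q.mono (not_lt.1 hc)) (not_le.2 hj)
      · exact ⟨h1 _ _ hQj, hj⟩
  have hdisj : Disjoint
      (Finset.univ.filter fun j => P.toFun j = P.toFun i ∧ Q.toFun j < Q.toFun i)
      (Finset.univ.filter fun j => Q.toFun j = Q.toFun i
          ∧ (finest n).toFun j < (finest n).toFun i) := by
    rw [Finset.disjoint_left]
    intro j hj1 hj2
    simp only [Finset.mem_filter] at hj1 hj2
    exact absurd hj2.2.1 (ne_of_lt hj1.2.2)
  unfold offsetQ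
  rw [hsplit, Finset.sum_union hdisj]
  have h2 : cPiece c (finest n) ((finest n).toFun i) = c i := cPiece_finest c i
  rw [h2]
  ring

lemma ePt_apply (ρ : ℝ) (c : Fin (n + 2) → ℝ) (P : IntervalPartition n) {d : ℕ}
    (x : Vec P.p d) (i : Fin n) :
    ePt ρ c P x i = extTuple ρ c P x (P.toFun (elt n i))
      + offsetQ ρ c P (finest n) (elt n i) • uVec d := by
  show eMap ρ c P (finest n) x i = _
  show extTuple ρ c P x (P.toFun (minElt (finest n) (elt n i)))
    + offsetQ ρ c P (finest n) (minElt (finest n) (elt n i)) • uVec d = _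
  rw [minElt_finest]

lemma avg_norm_sq_le {d : ℕ} {ι : Type*} [DecidableEq ι] (F : Finset ι) (w : ι → Rd d) :
    ‖((F.card : ℝ)⁻¹ • ∑ i ∈ F, w i)‖ ^ 2 ≤ ((F.card : ℝ))⁻¹ * ∑ i ∈ F, ‖w i‖ ^ 2 := by
  rcases Finset.eq_empty_or_nonempty F with rfl | hF
  · simp
  · have hc : (0:ℝ) < F.card := by exact_mod_cast hF.card_pos
    have h1 : ‖((F.card : ℝ)⁻¹ • ∑ i ∈ F, w i)‖ = (F.card:ℝ)⁻¹ * ‖∑ i ∈ F, w i‖ := by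
      rw [norm_smul, Real.norm_eq_abs, abs_of_nonneg (inv_nonneg.2 hc.le)]
    rw [h1, mul_pow]
    have h3 : ‖∑ i ∈ F, w i‖ ^ 2 ≤ (∑ i ∈ F, ‖w i‖) ^ 2 :=
      pow_le_pow_left₀ (norm_nonneg _) (norm_sum_le _ _) 2
    have h4 : (∑ i ∈ F, ‖w i‖) ^ 2 ≤ (F.card : ℝ) * ∑ i ∈ F, ‖w i‖ ^ 2 :=
      sq_sum_le_card_mul_sum_sq (s := F) (f := fun i => ‖w i‖)
    calc ((F.card:ℝ)⁻¹) ^ 2 * ‖∑ i ∈ F, w i‖ ^ 2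
        ≤ ((F.card:ℝ)⁻¹) ^ 2 * ((F.card : ℝ) * ∑ i ∈ F, ‖w i‖ ^ 2) :=
          mul_le_mul_of_nonneg_left (h3.trans h4) (by positivity)
      _ = ((F.card:ℝ))⁻¹ * ∑ i ∈ F, ‖w i‖ ^ 2 := by
          field_simp

lemma fiber_sum_le {m : ℕ} (gq : Fin n → Fin (m + 2)) (e : Fin m → Fin (m + 2))
    (he : Function.Injective e) (fv : Fin n → ℝ) (hf : ∀ i, 0 ≤ fv i) :
    ∑ b : Fin m, ∑ i ∈ (Finset.univ.filter fun i => gq i = e b), fv i ≤ ∑ i, fv i := by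
  have himg := Finset.sum_image (s := Finset.univ) (g := e)
      (f := fun a => ∑ i ∈ (Finset.univ.filter fun i => gq i = a), fv i)
      (fun b _ b' _ h => he h)
  have hfull := Finset.sum_fiberwise_of_maps_to (s := Finset.univ) (g := gq) (t := Finset.univ)
      (fun i _ => Finset.mem_univ (gq i)) fv
  calc ∑ b : Fin m, ∑ i ∈ (Finset.univ.filter fun i => gq i = e b), fv i
      = ∑ a ∈ Finset.univ.image e, ∑ i ∈ (Finset.univ.filter fun i => gq i = a), fv i :=
        himg.symm
    _ ≤ ∑ a : Fin (m + 2), ∑ i ∈ (Finset.univ.filter fun i => gq i = a), fv i :=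
        Finset.sum_le_sum_of_subset_of_nonneg (Finset.subset_univ _)
          (fun a _ _ => Finset.sum_nonneg fun i _ => hf i)
    _ = ∑ i, fv i := hfull

lemma elt_injective (m : ℕ) : Function.Injective (elt m) := by
  intro a b h
  have := congrArg Fin.val h
  simp only [elt] at this
  exact Fin.ext (by omega)

lemma minElt_val_pos {Q : IntervalPartition n} (b : Fin Q.p) :
    0 < (minElt Q (elt Q.p b) : ℕ) ∧ (minElt Q (elt Q.p b) : ℕ) < n + 1 := by
  have hQm : Q.toFun (minElt Q (elt Q.p b)) = elt Q.p b := toFun_minElt Q _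
  constructor
  · by_contra h
    have h0 : minElt Q (elt Q.p b) = 0 := by
      apply Fin.ext
      simp only [Fin.val_zero]
      omega
    rw [h0, toFun_zero Q] at hQm
    have h2 := congrArg Fin.val hQm
    simp only [elt, Fin.val_zero] at h2
    omega
  · by_contra h
    have hlt := (minElt Q (elt Q.p b)).isLt
    have h0 : minElt Q (elt Q.p b) = Fin.last (n + 1) := by
      apply Fin.ext
      simp only [Fin.val_last]
      omega
    rw [h0, toFun_last Q] at hQm
    have h2 := congrArg Fin.val hQm
    simp only [elt, Fin.val_last] at h2
    have h3 := b.isLt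
    omega

/-- if `Q` is a subdivision of `P` and `y ∈ ν_P`, then
`|e_{P,Q}(π_P(y)) - π_Q(y)| ≤ 2ε_P` in the Euclidean norm of `(ℝ^d)^q`. -/
theorem statement_2
    (n d : ℕ) (hn : 1 ≤ n) (hd : 1 ≤ d) (ρ ε : ℝ) (c : Fin (n + 2) → ℝ)
    (hρ0 : 0 < ρ) (hρ1 : ρ < 1) (hε0 : 0 < ε) (hc : ∀ i, 0 < c i)
    (hsum : ∑ i, c i = 1) (hc0 : 100 * ε / ρ < c 0)
    (hci : ∀ i : Fin (n + 2), 1 ≤ (i : ℕ) →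
      100 * (ε / ρ + ∑ j ∈ Finset.univ.filter (fun j : Fin (n + 2) => (j : ℕ) < (i : ℕ)), c j)
        < c i)
    (P Q : IntervalPartition n) (hQP : Subdivides Q P)
    (y : Vec n d) (hy : y ∈ nuP ρ ε c P d) :
    ‖eMap ρ c P Q (projP ρ c P y) - projP ρ c Q y‖ ≤ 2 * epsP ε P := by
  obtain ⟨x, hx⟩ := hy
  have h1 := hQP.1
  set w : Vec n d := y - ePt ρ c P x with hw
  have hwn : ‖w‖ < epsP ε P := hx
  have hyi : ∀ i : Fin n, y i = extTuple ρ c P x (P.toFun (elt n i))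
      + offsetQ ρ c P (finest n) (elt n i) • uVec d + w i := by
    intro i
    have hwi : w i = y i - ePt ρ c P x i := rfl
    rw [← ePt_apply ρ c P x i, hwi]
    abel
  set FQ : Fin Q.p → Finset (Fin n) :=
    (fun b => Finset.univ.filter fun i => Q.toFun (elt n i) = elt Q.p b) with hFQ
  set FP : Fin (P.p + 2) → Finset (Fin n) :=
    (fun a => Finset.univ.filter fun i => P.toFun (elt n i) = a) with hFP
  set aP : Fin Q.p → Fin (P.p + 2) :=
    (fun b => P.toFun (minElt Q (elt Q.p b))) with haP
  set A : Vec Q.p d := WithLp.toLp 2 (fun b => if 0 < (aP b : ℕ) ∧ (aP b : ℕ) < P.p + 1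
      then ((FP (aP b)).card : ℝ)⁻¹ • ∑ i ∈ FP (aP b), w i else 0) with hA
  set B : Vec Q.p d := WithLp.toLp 2 (fun b => ((FQ b).card : ℝ)⁻¹ • ∑ i ∈ FQ b, w i) with hB
  have hmQ : ∀ b : Fin Q.p, Q.toFun (minElt Q (elt Q.p b)) = elt Q.p b :=
    fun b => toFun_minElt Q _
  set jb : Fin Q.p → Fin n := (fun b => ⟨(minElt Q (elt Q.p b) : ℕ) - 1,
    by have h := minElt_val_pos (Q := Q) b; omega⟩) with hjb
  have hjel : ∀ b, elt n (jb b) = minElt Q (elt Q.p b) := by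
    intro b
    have h := minElt_val_pos (Q := Q) b
    apply Fin.ext
    simp only [hjb, elt] at h ⊢
    omega
  have hjQ : ∀ b, jb b ∈ FQ b := by
    intro b
    simp only [hFQ, Finset.mem_filter, Finset.mem_univ, true_and]
    rw [hjel b, hmQ b]
  have hFQcard : ∀ b, ((FQ b).card : ℝ) ≠ 0 := by
    intro b
    have h : 0 < (FQ b).card := Finset.card_pos.2 ⟨jb b, hjQ b⟩
    exact_mod_cast h.ne'
  -- the key pointwise identity
  have key : eMap ρ c P Q (projP ρ c P y) - projP ρ c Q y = A - B := by
    refine PiLp.ext fun b => ?_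
    have hsub : (eMap ρ c P Q (projP ρ c P y) - projP ρ c Q y) b
        = eMap ρ c P Q (projP ρ c P y) b - projP ρ c Q y b := rfl
    have hsub2 : (A - B) b = A b - B b := rfl
    rw [hsub, hsub2]
    have step1 : ∀ i ∈ FQ b, y i - offsetQ ρ c Q (finest n) (elt n i) • uVec d
        = (extTuple ρ c P x (aP b)
            + offsetQ ρ c P Q (minElt Q (elt Q.p b)) • uVec d) + w i := by
      intro i hi
      have hQi : Q.toFun (elt n i) = Q.toFun (minElt Q (elt Q.p b)) := by
        rw [hmQ b]
        simpa [hFQ] using hi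
      have hPi : P.toFun (elt n i) = aP b := by rw [haP]; exact h1 _ _ hQi
      rw [hyi i, hPi, offsetQ_add ρ c P Q h1 (elt n i),
        offsetQ_congr ρ c P Q h1 hQi, add_smul]
      abel
    have step2 : projP ρ c Q y b
        = (extTuple ρ c P x (aP b)
            + offsetQ ρ c P Q (minElt Q (elt Q.p b)) • uVec d) + B b := by
      have hproj : projP ρ c Q y b = ((FQ b).card : ℝ)⁻¹
          • ∑ i ∈ FQ b, (y i - offsetQ ρ c Q (finest n) (elt n i) • uVec d) := rfl
      rw [hproj, Finset.sum_congr rfl step1, Finset.sum_add_distrib, Finset.sum_const,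
        smul_add, ← Nat.cast_smul_eq_nsmul ℝ, smul_smul, inv_mul_cancel₀ (hFQcard b),
        one_smul]
    have step3 : extTuple ρ c P (projP ρ c P y) (aP b)
        = extTuple ρ c P x (aP b) + A b := by
      by_cases hext : 0 < (aP b : ℕ) ∧ (aP b : ℕ) < P.p + 1
      · have ha0 : ¬ ((aP b : ℕ) = 0) := by omega
        have ha1 : ¬ ((aP b : ℕ) = P.p + 1) := by omega
        have hlt' : (aP b : ℕ) - 1 < P.p := by omega
        have hAb : A b = ((FP (aP b)).card : ℝ)⁻¹ • ∑ i ∈ FP (aP b), w i := by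
          rw [hA]; exact if_pos hext
        have hjP : jb b ∈ FP (aP b) := by
          simp only [hFP, Finset.mem_filter, Finset.mem_univ, true_and]
          rw [hjel b, haP]
        have hcardP : ((FP (aP b)).card : ℝ) ≠ 0 := by
          have h : 0 < (FP (aP b)).card := Finset.card_pos.2 ⟨jb b, hjP⟩
          exact_mod_cast h.ne'
        have hxval : extTuple ρ c P x (aP b) = x ⟨(aP b : ℕ) - 1, hlt'⟩ := by
          simp only [extTuple]
          rw [dif_neg ha0, dif_neg ha1]
        have hyval : extTuple ρ c P (projP ρ c P y) (aP b)
            = projP ρ c P y ⟨(aP b : ℕ) - 1, hlt'⟩ := by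
          simp only [extTuple]
          rw [dif_neg ha0, dif_neg ha1]
        have hsum3 : ∀ i ∈ FP (aP b),
            y i - offsetQ ρ c P (finest n) (elt n i) • uVec d
            = x ⟨(aP b : ℕ) - 1, hlt'⟩ + w i := by
          intro i hi
          have hPi : P.toFun (elt n i) = aP b := by
            simpa [hFP] using hi
          rw [hyi i, hPi, hxval]
          abel
        have helt : elt P.p ⟨(aP b : ℕ) - 1, hlt'⟩ = aP b := by
          apply Fin.ext; simp only [elt]; omega
        have hdef : projP ρ c P y ⟨(aP b : ℕ) - 1, hlt'⟩
            = ((FP (elt P.p ⟨(aP b : ℕ) - 1, hlt'⟩)).card : ℝ)⁻¹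
              • ∑ i ∈ FP (elt P.p ⟨(aP b : ℕ) - 1, hlt'⟩),
                (y i - offsetQ ρ c P (finest n) (elt n i) • uVec d) := rfl
        rw [hyval, hdef, helt, Finset.sum_congr rfl hsum3, Finset.sum_add_distrib,
          Finset.sum_const, smul_add, ← Nat.cast_smul_eq_nsmul ℝ, smul_smul,
          inv_mul_cancel₀ hcardP, one_smul, hxval, hAb]
      · have hAb : A b = 0 := by rw [hA]; exact if_neg hext
        rw [hAb, add_zero]
        have hcases : (aP b : ℕ) = 0 ∨ (aP b : ℕ) = P.p + 1 := by
          have h := (aP b).isLt; omega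
        rcases hcases with h0 | h0
        · simp only [extTuple, dif_pos h0]
        · have ha0 : ¬ ((aP b : ℕ) = 0) := by omega
          simp only [extTuple]
          rw [dif_neg ha0, dif_pos h0, dif_neg ha0, dif_pos h0]
    have hemap : eMap ρ c P Q (projP ρ c P y) b
        = extTuple ρ c P (projP ρ c P y) (aP b)
          + offsetQ ρ c P Q (minElt Q (elt Q.p b)) • uVec d := rfl
    rw [hemap, step3, step2]
    abel
  -- norm bounds
  have hnw : ‖w‖ ^ 2 = ∑ i, ‖w i‖ ^ 2 := PiLp.norm_sq_eq_of_L2 _ w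
  have hnB : ‖B‖ ^ 2 ≤ ‖w‖ ^ 2 := by
    rw [PiLp.norm_sq_eq_of_L2, hnw]
    have h5 : ∀ b : Fin Q.p, ‖B b‖ ^ 2 ≤ ∑ i ∈ FQ b, ‖w i‖ ^ 2 := by
      intro b
      have h6 : ‖B b‖ ^ 2 ≤ ((FQ b).card : ℝ)⁻¹ * ∑ i ∈ FQ b, ‖w i‖ ^ 2 := by
        rw [hB]; exact avg_norm_sq_le _ _
      refine h6.trans ?_
      have hle1 : ((FQ b).card : ℝ)⁻¹ ≤ 1 := by
        rcases Nat.eq_zero_or_pos (FQ b).card with h | h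
        · simp [h]
        · have h2 : (1 : ℝ) ≤ ((FQ b).card : ℝ) := by exact_mod_cast h
          exact inv_le_one_of_one_le₀ h2
      exact mul_le_of_le_one_left (Finset.sum_nonneg fun i _ => by positivity) hle1
    refine (Finset.sum_le_sum fun b _ => h5 b).trans ?_
    have h7 := fiber_sum_le (fun i => Q.toFun (elt n i)) (elt Q.p) (elt_injective Q.p)
      (fun i => ‖w i‖ ^ 2) (fun i => by positivity)
    simpa [hFQ] using h7
  have hnA : ‖A‖ ^ 2 ≤ ‖w‖ ^ 2 := by
    rw [PiLp.norm_sq_eq_of_L2, hnw]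
    have hAfib := Finset.sum_fiberwise_of_maps_to (s := Finset.univ) (t := Finset.univ)
      (g := aP) (fun b _ => Finset.mem_univ (aP b)) (fun b => ‖A b‖ ^ 2)
    have hwfib := Finset.sum_fiberwise_of_maps_to (s := Finset.univ) (t := Finset.univ)
      (g := fun i : Fin n => P.toFun (elt n i)) (fun i _ => Finset.mem_univ _)
      (fun i => ‖w i‖ ^ 2)
    rw [← hAfib, ← hwfib]
    refine Finset.sum_le_sum fun a _ => ?_
    have hFPeq : (Finset.univ.filter fun i : Fin n => P.toFun (elt n i) = a) = FP a := by
      rw [hFP]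
    rw [hFPeq]
    by_cases hext : 0 < (a : ℕ) ∧ (a : ℕ) < P.p + 1
    · have hval : ∀ b ∈ Finset.univ.filter fun b => aP b = a,
          ‖A b‖ ^ 2 = ‖((FP a).card : ℝ)⁻¹ • ∑ i ∈ FP a, w i‖ ^ 2 := by
        intro b hb
        have hba : aP b = a := by simpa using hb
        have hAb : A b = ((FP a).card : ℝ)⁻¹ • ∑ i ∈ FP a, w i := by
          rw [hA]
          simp only
          rw [hba]
          exact if_pos hext
        rw [hAb]
      rw [Finset.sum_congr rfl hval, Finset.sum_const, nsmul_eq_mul]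
      have hcard : (Finset.univ.filter fun b => aP b = a).card ≤ (FP a).card := by
        apply Finset.card_le_card_of_injOn jb
        · intro b hb
          have hba : aP b = a := by simpa using hb
          simp only [hFP, Finset.mem_coe, Finset.mem_filter, Finset.mem_univ, true_and]
          rw [hjel b]
          rw [haP] at hba
          exact hba
        · intro b hb b' hb' hbb
          have h7 : ((jb b : Fin n) : ℕ) = ((jb b' : Fin n) : ℕ) := congrArg Fin.val hbb
          simp only [hjb] at h7
          have hb1 := minElt_val_pos (Q := Q) b
          have hb2 := minElt_val_pos (Q := Q) b'
          have h8 : minElt Q (elt Q.p b) = minElt Q (elt Q.p b') := by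
            apply Fin.ext; omega
          have h9 : elt Q.p b = elt Q.p b' := by rw [← hmQ b, ← hmQ b', h8]
          exact elt_injective Q.p h9
      calc ((Finset.univ.filter fun b => aP b = a).card : ℝ)
            * ‖((FP a).card : ℝ)⁻¹ • ∑ i ∈ FP a, w i‖ ^ 2
          ≤ ((FP a).card : ℝ) * (((FP a).card : ℝ)⁻¹ * ∑ i ∈ FP a, ‖w i‖ ^ 2) := by
            apply mul_le_mul (by exact_mod_cast hcard) (avg_norm_sq_le _ _)
              (by positivity) (by positivity)
        _ ≤ ∑ i ∈ FP a, ‖w i‖ ^ 2 := by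
            rcases Nat.eq_zero_or_pos (FP a).card with h | h
            · have he : FP a = ∅ := Finset.card_eq_zero.mp h
              simp [he]
            · have hne : ((FP a).card : ℝ) ≠ 0 := by exact_mod_cast h.ne'
              rw [← mul_assoc, mul_inv_cancel₀ hne, one_mul]
    · have hz : ∀ b ∈ Finset.univ.filter fun b => aP b = a, ‖A b‖ ^ 2 = 0 := by
        intro b hb
        have hba : aP b = a := by simpa using hb
        have hAb : A b = 0 := by
          rw [hA]
          simp only
          rw [hba]
          exact if_neg hext
        rw [hAb]
        simp
      rw [Finset.sum_congr rfl hz, Finset.sum_const_zero]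
      exact Finset.sum_nonneg fun i _ => by positivity
  have hA' : ‖A‖ ≤ ‖w‖ :=
    (pow_le_pow_iff_left₀ (norm_nonneg _) (norm_nonneg _) two_ne_zero).1 hnA
  have hB' : ‖B‖ ≤ ‖w‖ :=
    (pow_le_pow_iff_left₀ (norm_nonneg _) (norm_nonneg _) two_ne_zero).1 hnB
  rw [key]
  calc ‖A - B‖ ≤ ‖A‖ + ‖B‖ := norm_sub_le A B
    _ ≤ 2 * epsP ε P := by linarith

end SinhaKnots
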